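/- arXiv:1508.00138 — 2 statements merged into one kernel-verified Lean document; each statement's English description precedes it below -/
import Mathlib

section
/- Let a ≠ 0, b ∈ ℝ, p ≥ 1, and let w_n(t) be defined by w_0(t)=1 and w_n(t) = Σ_{j=0}^{⌊(n-1)/p⌋} ((n+j-1)! b^j)/(j! (n-jp-1)! a^{n+j}) · t^{n-jp} for n ≥ 1. Then the sequence {w_n} is of binomial type: for all n ≥ 0 and all s, t ∈ ℝ, w_n(s+t) = Σ_{k=0}^n C(n,k) w_k(s) w_{n-k}(t). -/
/-!
The `w n` are the basic polynomials of the delta operator `Q = a D - b D^(p+1)`: `w 0 = 1`,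
`w n` vanishes at `0` for `n ≥ 1`, and `Q (w (n+1)) = (n+1) w n`. Every such sequence is of binomial
type. Indeed, fix `t` and compare `s ↦ w n (s + t)` with `s ↦ ∑ C(n,k) w k (s) w (n-k) (t)` as
polynomials in `s`: since `Q` commutes with translations, it sends both sides to `n` times the two
sides of the identity for `n - 1`, and both sides take the value `w n (t)` at `s = 0`. As `a ≠ 0` and
`p ≥ 1`, `Q` lowers the degree of a nonconstant polynomial by exactly one, so it is injective on
polynomials vanishing at `0`, and induction on `n` concludes.
-/

/-- The basic polynomials for the delta operator `aD - bD^(p+1)`. -/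
noncomputable def w (a b : ℝ) (p : ℕ) (n : ℕ) (t : ℝ) : ℝ :=
  if n = 0 then 1 else
    ∑ j ∈ Finset.range ((n - 1) / p + 1),
      ((n + j - 1).factorial * b ^ j) /
        (j.factorial * (n - j * p - 1).factorial * a ^ (n + j)) * t ^ (n - j * p)

open Polynomial Finset

/-- Basic sequence of `Q` in the sense of Rota's umbral calculus. -/
structure IsBasicSequence {R : Type*} [CommRing R] (Q : Module.End R R[X]) (q : ℕ → R[X]) :
    Prop where
  zero : q 0 = 1
  apply_zero : Q (q 0) = 0
  apply_succ : ∀ n, Q (q (n + 1)) = ((n + 1 : ℕ) : R) • q n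
  eval_zero : ∀ n ≠ 0, (q n).eval 0 = 0

namespace IsBasicSequence

variable {R : Type*} [CommRing R] {Q : Module.End R R[X]} {q : ℕ → R[X]}

theorem apply_sum_choose (hq : IsBasicSequence Q q) (x : ℕ → R) (n : ℕ) :
    Q (∑ k ∈ range (n + 1 + 1), ((n + 1).choose k * x (n + 1 - k)) • q k)
      = ((n + 1 : ℕ) : R) • ∑ k ∈ range (n + 1), (n.choose k * x (n - k)) • q k := by
  rw [map_sum, sum_range_succ', smul_sum]
  simp only [map_smul, hq.apply_succ, hq.apply_zero, smul_zero, add_zero, smul_smul]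
  refine sum_congr rfl fun k _ => ?_
  have hchoose : ((n + 1).choose (k + 1) : R) * (k + 1) = (n + 1) * n.choose k := by
    exact_mod_cast congrArg (Nat.cast : ℕ → R) (Nat.add_one_mul_choose_eq n k).symm
  rw [Nat.add_sub_add_right]
  congr 1
  push_cast
  linear_combination x (n - k) * hchoose

theorem eval_zero_sum (hq : IsBasicSequence Q q) (r : ℕ → R) (n : ℕ) :
    (∑ k ∈ range (n + 1), r k • q k).eval 0 = r 0 := by
  rw [eval_finsetSum, sum_range_succ', sum_eq_zero fun k _ => ?_]
  · simp [hq.zero]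
  · rw [eval_smul, hq.eval_zero _ k.succ_ne_zero, smul_zero]

theorem taylor_eq_sum (hq : IsBasicSequence Q q) (hQ : ∀ t, Commute Q (taylor t))
    (hker : ∀ f, Q f = 0 → f.eval 0 = 0 → f = 0) (n : ℕ) (t : R) :
    taylor t (q n) = ∑ k ∈ range (n + 1), (n.choose k * (q (n - k)).eval t) • q k := by
  induction n with
  | zero => simp [hq.zero]
  | succ n ih =>
    rw [← sub_eq_zero]
    refine hker _ ?_ ?_
    · rw [map_sub, hq.apply_sum_choose fun k => (q k).eval t, ← Module.End.mul_apply,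
        (hQ t).eq, Module.End.mul_apply, hq.apply_succ, map_smul, ih, sub_self]
    · rw [eval_sub, hq.eval_zero_sum, taylor_eval]
      simp

theorem eval_add (hq : IsBasicSequence Q q) (hQ : ∀ t, Commute Q (taylor t))
    (hker : ∀ f, Q f = 0 → f.eval 0 = 0 → f = 0) (n : ℕ) (s t : R) :
    (q n).eval (s + t)
      = ∑ k ∈ range (n + 1), n.choose k * (q k).eval s * (q (n - k)).eval t := by
  rw [← taylor_eval, hq.taylor_eq_sum hQ hker, eval_finsetSum]
  refine sum_congr rfl fun k _ => ?_
  rw [eval_smul, smul_eq_mul]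
  ring

end IsBasicSequence

theorem commute_derivative_taylor {R : Type*} [CommSemiring R] (t : R) :
    Commute (derivative : Module.End R R[X]) (taylor t) := by
  refine LinearMap.ext fun f => ?_
  simp [taylor_apply, derivative_comp]

section DeltaOperator

variable {R : Type*} [CommRing R]

noncomputable def deltaOp (a b : R) (p : ℕ) : Module.End R R[X] :=
  a • derivative - b • derivative ^ (p + 1)

theorem deltaOp_apply (a b : R) (p : ℕ) (f : R[X]) :
    deltaOp a b p f = a • derivative f - b • derivative^[p + 1] f := by
  simp [deltaOp, Module.End.pow_apply]

theorem commute_deltaOp_taylor (a b : R) (p : ℕ) (t : R) : Commute (deltaOp a b p) (taylor t) :=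
  ((commute_derivative_taylor t).smul_left a).sub_left
    (((commute_derivative_taylor t).pow_left _).smul_left b)

theorem deltaOp_one (a b : R) (p : ℕ) : deltaOp a b p 1 = 0 := by
  rw [deltaOp_apply, derivative_one, iterate_derivative_one p.succ_pos, smul_zero, smul_zero,
    sub_zero]

theorem deltaOp_C_mul_X_pow (a b r : R) (p m : ℕ) :
    deltaOp a b p (C r * X ^ (m + 1))
      = C (a * r * (m + 1 : ℕ)) * X ^ m
        - C (b * r * (m + 1).descFactorial (p + 1)) * X ^ (m - p) := by
  rw [deltaOp_apply, derivative_C_mul_X_pow, iterate_derivative_C_mul,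
    iterate_derivative_X_pow_eq_C_mul, Nat.add_sub_cancel, Nat.add_sub_add_right, smul_eq_C_mul,
    smul_eq_C_mul]
  simp only [C_mul]
  ring

theorem eq_zero_of_deltaOp_eq_zero [IsDomain R] [CharZero R] {a b : R} {p : ℕ} (ha : a ≠ 0)
    (hp : 1 ≤ p) {f : R[X]} (hf : deltaOp a b p f = 0) (h0 : f.eval 0 = 0) : f = 0 := by
  by_contra hne
  -- the coefficient of `X ^ (deg f - 1)` in `deltaOp a b p f` is `a * deg f * lc f`, as `p ≥ 1`
  obtain ⟨d, hd⟩ : ∃ d, f.natDegree = d + 1 := by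
    refine Nat.exists_eq_add_one.mpr (Nat.pos_of_ne_zero fun hdeg => hne ?_)
    rw [eq_C_of_natDegree_eq_zero hdeg, coeff_zero_eq_eval_zero, h0, C_0]
  have hcoeff := congrArg (coeff · d) hf
  simp only [deltaOp_apply, coeff_sub, coeff_smul, coeff_derivative, coeff_iterate_derivative,
    coeff_zero, smul_eq_mul] at hcoeff
  have hdeg : f.natDegree < d + (p + 1) := by omega
  rw [coeff_eq_zero_of_natDegree_lt hdeg, smul_zero, mul_zero, sub_zero, ← hd, ← leadingCoeff]
    at hcoeff
  exact mul_ne_zero ha (mul_ne_zero (leadingCoeff_ne_zero.mpr hne) (Nat.cast_add_one_ne_zero d))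
    hcoeff

end DeltaOperator

theorem Finset.sum_range_succ_sub_eq_of_shift {M : Type*} [AddCommGroup M] (f g u : ℕ → M)
    (N : ℕ) (h₀ : f 0 = u 0) (hsucc : ∀ j < N, f (j + 1) = u (j + 1) + g j) (hN : g N = 0) :
    ∑ j ∈ range (N + 1), (f j - g j) = ∑ j ∈ range (N + 1), u j := by
  rw [sum_sub_distrib, sum_range_succ' f, sum_range_succ g, sum_range_succ' u, hN, h₀,
    sum_congr rfl fun j hj => hsucc j (mem_range.mp hj), sum_add_distrib]
  abel

section BasicPolynomials

variable {K : Type*} [Field K] {a b : K} {p : ℕ}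

noncomputable def basicCoeff (a b : K) (p n j : ℕ) : K :=
  ((n + j - 1).factorial * b ^ j) / (j.factorial * (n - j * p - 1).factorial * a ^ (n + j))

noncomputable def basicPoly (a b : K) (p n : ℕ) : K[X] :=
  if n = 0 then 1 else
    ∑ j ∈ range ((n - 1) / p + 1), C (basicCoeff a b p n j) * X ^ (n - j * p)

theorem basicCoeff_eq {n j s m : ℕ} (hs : n + j - 1 = s) (hm : n - j * p - 1 = m) :
    basicCoeff a b p n j = s.factorial * b ^ j / (j.factorial * m.factorial * a ^ (n + j)) := by
  rw [basicCoeff, hs, hm]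

theorem basicPoly_zero : basicPoly a b p 0 = 1 := if_pos rfl

theorem basicPoly_succ (n : ℕ) :
    basicPoly a b p (n + 1)
      = ∑ j ∈ range (n / p + 1), C (basicCoeff a b p (n + 1) j) * X ^ (n - j * p + 1) := by
  rw [basicPoly, if_neg n.succ_ne_zero, Nat.add_sub_cancel]
  refine sum_congr rfl fun j hj => ?_
  have : j * p ≤ n :=
    (Nat.mul_le_mul_right p (mem_range_succ_iff.mp hj)).trans (Nat.div_mul_le_self n p)
  rw [Nat.sub_add_comm this]

theorem basicPoly_eq_sum_ite (hp : 1 ≤ p) {n : ℕ} (hn : n ≠ 0) :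
    basicPoly a b p n = ∑ j ∈ range (n / p + 1),
      if j * p < n then C (basicCoeff a b p n j) * X ^ (n - j * p) else 0 := by
  rw [basicPoly, if_neg hn, ← sum_filter]
  congr 1
  ext j
  simp only [mem_range, mem_filter, Nat.lt_succ_iff, Nat.le_div_iff_mul_le hp]
  omega

theorem eval_basicPoly_zero (hp : 1 ≤ p) {n : ℕ} (hn : n ≠ 0) :
    (basicPoly a b p n).eval 0 = 0 := by
  rw [basicPoly_eq_sum_ite hp hn, eval_finsetSum]
  refine sum_eq_zero fun j _ => ?_
  split_ifs with h
  · rw [eval_mul, eval_pow, eval_X, zero_pow (by omega), mul_zero]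
  · exact eval_zero

variable [CharZero K]

theorem basicCoeff_zero (n : ℕ) : basicCoeff a b p n 0 = (a ^ n)⁻¹ := by
  rw [basicCoeff_eq rfl (by omega : n - 0 * p - 1 = n + 0 - 1), Nat.factorial_zero, Nat.cast_one,
    pow_zero, mul_one, one_mul, add_zero,
    div_mul_cancel_left₀ (Nat.cast_ne_zero.mpr (Nat.factorial_ne_zero _))]

theorem basicCoeff_succ_rec (ha : a ≠ 0) {n j : ℕ} (h : (j + 1) * p < n) :
    a * basicCoeff a b p (n + 1) (j + 1) * (n - (j + 1) * p + 1 : ℕ)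
      = (n + 1 : ℕ) * basicCoeff a b p n (j + 1)
        + b * basicCoeff a b p (n + 1) j * (n - j * p + 1).descFactorial (p + 1) := by
  obtain ⟨m, rfl⟩ : ∃ m, n = (j + 1) * p + m + 1 := ⟨n - (j + 1) * p - 1, by omega⟩
  have hjp : (j + 1) * p = j * p + p := by ring
  rw [basicCoeff_eq (s := (j + 1) * p + m + 1 + j + 1) (m := m + 1) (by omega) (by omega),
    basicCoeff_eq (s := (j + 1) * p + m + 1 + j) (m := m) (by omega) (by omega),
    basicCoeff_eq (s := (j + 1) * p + m + 1 + j) (m := p + m + 1) (by omega) (by omega),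
    show (j + 1) * p + m + 1 - (j + 1) * p + 1 = m + 1 + 1 by omega,
    show (j + 1) * p + m + 1 - j * p + 1 = p + m + 1 + 1 by omega]
  have hdesc : ((p + m + 1 + 1).descFactorial (p + 1) : K)
      = (p + m + 1 + 1).factorial / (m + 1).factorial := by
    have h := Nat.factorial_mul_descFactorial (by omega : p + 1 ≤ p + m + 1 + 1)
    rw [show p + m + 1 + 1 - (p + 1) = m + 1 by omega] at h
    rw [eq_div_iff (Nat.cast_ne_zero.mpr (Nat.factorial_ne_zero _)), mul_comm]
    exact_mod_cast h
  rw [hdesc, Nat.factorial_succ ((j + 1) * p + m + 1 + j), Nat.factorial_succ m,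
    Nat.factorial_succ (p + m + 1), Nat.factorial_succ j]
  push_cast
  field_simp [Nat.factorial_ne_zero]
  ring

theorem basicCoeff_succ_top (ha : a ≠ 0) {n j : ℕ} (h : (j + 1) * p = n) :
    a * basicCoeff a b p (n + 1) (j + 1) * (n - (j + 1) * p + 1 : ℕ)
      = b * basicCoeff a b p (n + 1) j * (n - j * p + 1).descFactorial (p + 1) := by
  subst h
  have hjp : (j + 1) * p = j * p + p := by ring
  rw [basicCoeff_eq (s := (j + 1) * p + j + 1) (m := 0) (by omega) (by omega),
    basicCoeff_eq (s := (j + 1) * p + j) (m := p) (by omega) (by omega),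
    show (j + 1) * p - (j + 1) * p + 1 = 1 by omega,
    show (j + 1) * p - j * p + 1 = p + 1 by omega, Nat.descFactorial_self,
    Nat.factorial_succ ((j + 1) * p + j), Nat.factorial_succ p, Nat.factorial_succ j]
  push_cast
  field_simp [Nat.factorial_ne_zero]
  ring

theorem deltaOp_basicPoly_succ (ha : a ≠ 0) (hp : 1 ≤ p) (n : ℕ) :
    deltaOp a b p (basicPoly a b p (n + 1)) = ((n + 1 : ℕ) : K) • basicPoly a b p n := by
  rw [basicPoly_succ, map_sum]
  simp only [deltaOp_C_mul_X_pow]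
  rcases Nat.eq_zero_or_pos n with rfl | hn
  · rw [Nat.zero_div, sum_range_one]
    simp only [zero_mul, Nat.sub_zero, zero_add, Nat.zero_sub]
    rw [Nat.descFactorial_eq_zero_iff_lt.mpr (by omega : 1 < p + 1)]
    simp [basicPoly_zero, basicCoeff_zero, ha]
  rw [basicPoly_eq_sum_ite hp hn.ne', smul_sum]
  -- `deltaOp` sends the `j`-th term of `basicPoly (n + 1)` to two monomials; the lower one
  -- combines with the upper one of the `(j + 1)`-st term into the `(j + 1)`-st term of
  -- `(n + 1) • basicPoly n`
  refine sum_range_succ_sub_eq_of_shift _ _ _ _ ?_ (fun j hj => ?_) ?_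
  · rw [zero_mul, Nat.sub_zero, if_pos hn, basicCoeff_zero, basicCoeff_zero, smul_eq_C_mul,
      ← mul_assoc, ← C_mul]
    congr 2
    field_simp
    ring
  · rw [Nat.sub_sub, show j * p + p = (j + 1) * p by ring]
    rcases (Nat.mul_le_mul_right p (Nat.succ_le_of_lt hj)).trans (Nat.div_mul_le_self n p)
      |>.lt_or_eq with h | h
    · rw [if_pos h, smul_eq_C_mul, ← mul_assoc, ← C_mul, ← add_mul, ← C_add,
        basicCoeff_succ_rec ha h]
    · rw [if_neg h.not_lt, smul_zero, zero_add, basicCoeff_succ_top ha h]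
  · have hlt : n - n / p * p + 1 < p + 1 := by
      have := Nat.div_add_mod' n p
      have := Nat.mod_lt n hp
      omega
    rw [Nat.descFactorial_eq_zero_iff_lt.mpr hlt, Nat.cast_zero, mul_zero, C_0, zero_mul]

theorem isBasicSequence_basicPoly (ha : a ≠ 0) (hp : 1 ≤ p) :
    IsBasicSequence (deltaOp a b p) (basicPoly a b p) where
  zero := basicPoly_zero
  apply_zero := by rw [basicPoly_zero, deltaOp_one]
  apply_succ := deltaOp_basicPoly_succ ha hp
  eval_zero _ := eval_basicPoly_zero hp

end BasicPolynomials

theorem eval_basicPoly (a b : ℝ) (p n : ℕ) (t : ℝ) : (basicPoly a b p n).eval t = w a b p n t := by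
  unfold basicPoly w basicCoeff
  split_ifs
  · exact eval_one
  · simp [eval_finsetSum]

theorem stmt_1 (a b : ℝ) (p : ℕ) (ha : a ≠ 0) (hp : 1 ≤ p) (n : ℕ) (s t : ℝ) :
    w a b p n (s + t)
      = ∑ k ∈ Finset.range (n + 1), (n.choose k : ℝ) * w a b p k s * w a b p (n - k) t := by
  simpa only [eval_basicPoly] using
    (isBasicSequence_basicPoly ha hp).eval_add (commute_deltaOp_taylor a b p)
      (fun _ => eq_zero_of_deltaOp_eq_zero ha hp) n s t
end

section
/- For n ≥ 0 and t > 0, the Bessel polynomial satisfies y_n(t) = ∫_0^∞ u^n · exp(−(u−1)²/(2tu))/√(2πtu) du, where y_n(t) = Σ_{j=0}^n ((n+j)!/(j!(n−j)!)) (t/2)^j. In particular, exp(−(u−1)²/(2tu))/√(2πtu) is a probability density on (0,∞) (case n = 0, since y_0 = 1). -/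
open Real MeasureTheory Set

/-!
Substituting `u = exp x` turns the integral into `I (n + 1/2) / √(2πt)`, where
`I a = ∫ exp (a x - (cosh x - 1) / t) dx = 2 e^{1/t} K_a(1/t)`. Integrating the derivative of this
integrand over `ℝ` gives the recurrence `I (a + 1) = 2 t a I a + I (a - 1)` of the modified Bessel
functions, which at half-integers is the recurrence `y (n+2) = (2n+3) t y (n+1) + y n` of the Bessel
polynomials. As `I` is even in `a`, the base value `I (1/2) = (I (1/2) + I (-1/2)) / 2` becomes a
Gaussian integral after the substitution `s = sinh (x / 2)`.
-/

/-- The Bessel polynomials. -/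
noncomputable def y (n : ℕ) (t : ℝ) : ℝ :=
  ∑ j ∈ Finset.range (n + 1),
    ((n + j).factorial : ℝ) / (j.factorial * (n - j).factorial) * (t / 2) ^ j

section Coefficients

open Finset Nat

-- Unlike the factorial formula in `y`, whose `n - j` truncates, this vanishes for `j > n`.
noncomputable def besselCoeff (n j : ℕ) : ℝ := ((n + j).descFactorial (2 * j) : ℝ) / j !

lemma besselCoeff_zero_right (n : ℕ) : besselCoeff n 0 = 1 := by
  simp [besselCoeff]

lemma besselCoeff_of_lt {n j : ℕ} (h : n < j) : besselCoeff n j = 0 := by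
  simp [besselCoeff, descFactorial_eq_zero_iff_lt.2 (by omega : n + j < 2 * j)]

lemma besselCoeff_of_le {n j : ℕ} (h : j ≤ n) :
    besselCoeff n j = ((n + j)! : ℝ) / (j ! * (n - j)!) := by
  rw [besselCoeff, ← factorial_mul_descFactorial (by omega : 2 * j ≤ n + j),
    show n + j - 2 * j = n - j by omega]
  push_cast
  field_simp

lemma descFactorial_bessel_recurrence (n j : ℕ) :
    (n + j + 3).descFactorial (2 * j + 2)
      = 2 * (2 * n + 3) * (j + 1) * (n + j + 1).descFactorial (2 * j)
        + (n + j + 1).descFactorial (2 * j + 2) := by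
  have hpeel : (n + j + 3).descFactorial (2 * j + 2)
      = (n + j + 3) * (n + j + 2) * (n + j + 1).descFactorial (2 * j) := by
    rw [succ_descFactorial_succ, succ_descFactorial_succ, mul_assoc]
  rw [hpeel, descFactorial_succ, descFactorial_succ]
  rcases lt_trichotomy j (n + 1) with h | rfl | h
  · obtain ⟨k, rfl⟩ : ∃ k, n = j + k := ⟨n - j, by omega⟩
    rw [show j + k + j + 1 - (2 * j + 1) = k by omega, show j + k + j + 1 - 2 * j = k + 1 by omega]
    ring
  · rw [show n + (n + 1) + 1 - (2 * (n + 1) + 1) = 0 by omega]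
    ring
  · simp [descFactorial_eq_zero_iff_lt.2 (by omega : n + j + 1 < 2 * j)]

lemma besselCoeff_succ_succ (n j : ℕ) :
    besselCoeff (n + 2) (j + 1)
      = 2 * (2 * n + 3) * besselCoeff (n + 1) j + besselCoeff n (j + 1) := by
  have h := congrArg (Nat.cast (R := ℝ)) (descFactorial_bessel_recurrence n j)
  simp only [besselCoeff, factorial_succ]
  rw [show n + 2 + (j + 1) = n + j + 3 by omega, show n + 1 + j = n + j + 1 by omega,
    show n + (j + 1) = n + j + 1 by omega, show 2 * (j + 1) = 2 * j + 2 by omega, h]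
  push_cast
  field_simp

lemma y_eq_sum_besselCoeff {n N : ℕ} (h : n < N) (t : ℝ) :
    y n t = ∑ j ∈ range N, besselCoeff n j * (t / 2) ^ j := by
  rw [y]
  refine sum_subset_zero_on_sdiff (range_subset_range.2 h) (fun j hj => ?_) (fun j hj => ?_)
  · rw [besselCoeff_of_lt (by simp at hj; omega), zero_mul]
  · rw [besselCoeff_of_le (by simp at hj; omega)]

lemma y_add_two (n : ℕ) (t : ℝ) :
    y (n + 2) t = (2 * n + 3) * t * y (n + 1) t + y n t := by
  have hshift : ∑ j ∈ range (n + 2), besselCoeff (n + 2) (j + 1) * (t / 2) ^ (j + 1)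
      = (2 * n + 3) * t * ∑ j ∈ range (n + 2), besselCoeff (n + 1) j * (t / 2) ^ j
        + ∑ j ∈ range (n + 2), besselCoeff n (j + 1) * (t / 2) ^ (j + 1) := by
    rw [mul_sum, ← sum_add_distrib]
    refine sum_congr rfl fun j _ => ?_
    rw [besselCoeff_succ_succ]
    ring
  rw [y_eq_sum_besselCoeff (by omega : n + 2 < n + 3),
    y_eq_sum_besselCoeff (by omega : n + 1 < n + 2), y_eq_sum_besselCoeff (by omega : n < n + 3),
    sum_range_succ', sum_range_succ' (fun j => besselCoeff n j * _), hshift,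
    besselCoeff_zero_right, besselCoeff_zero_right]
  ring

end Coefficients

lemma integral_abs_deriv_mul_comp {φ φ' : ℝ → ℝ} (hφ : Function.Injective φ)
    (hderiv : ∀ x, HasDerivAt φ (φ' x) x) (g : ℝ → ℝ) :
    ∫ x, |φ' x| * g (φ x) = ∫ y in range φ, g y := by
  rw [← image_univ, integral_image_eq_integral_abs_deriv_smul MeasurableSet.univ
    (fun x _ => (hderiv x).hasDerivWithinAt) hφ.injOn, Measure.restrict_univ]
  rfl

lemma cosh_eq_one_add_two_mul_sinh_half_sq (x : ℝ) : cosh x = 1 + 2 * sinh (x / 2) ^ 2 := by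
  have h := cosh_two_mul (x / 2)
  rw [mul_div_cancel₀ x two_ne_zero, cosh_sq] at h
  linarith

lemma sq_div_two_le_cosh_sub_one (x : ℝ) : x ^ 2 / 2 ≤ cosh x - 1 := by
  have h : |x / 2| ≤ |sinh (x / 2)| := by
    rw [abs_sinh]; exact self_le_sinh_iff.2 (abs_nonneg _)
  have := sq_le_sq.2 h
  rw [cosh_eq_one_add_two_mul_sinh_half_sq]
  nlinarith

section BesselKIntegral

noncomputable def besselKIntegrand (t a x : ℝ) : ℝ := exp (a * x - (cosh x - 1) / t)

noncomputable def besselKIntegral (t a : ℝ) : ℝ := ∫ x, besselKIntegrand t a x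

lemma besselKIntegrand_le_gaussian {t : ℝ} (ht : 0 < t) (a x : ℝ) :
    besselKIntegrand t a x ≤ exp (a ^ 2 * t) * exp (-(1 / (4 * t)) * x ^ 2) := by
  rw [besselKIntegrand, ← exp_add, exp_le_exp]
  have hcosh : x ^ 2 / (2 * t) ≤ (cosh x - 1) / t := by
    rw [← div_div]
    gcongr
    exact sq_div_two_le_cosh_sub_one x
  have hsq : (2 * a * t - x) ^ 2 / (4 * t) = a ^ 2 * t - a * x + x ^ 2 / (4 * t) := by
    field_simp; ring
  have hhalf : x ^ 2 / (2 * t) = 2 * (x ^ 2 / (4 * t)) := by field_simp; ring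
  have : 0 ≤ (2 * a * t - x) ^ 2 / (4 * t) := by positivity
  have : -(1 / (4 * t)) * x ^ 2 = -(x ^ 2 / (4 * t)) := by ring
  linarith

lemma integrable_besselKIntegrand {t : ℝ} (ht : 0 < t) (a : ℝ) :
    Integrable (besselKIntegrand t a) := by
  have hcont : Continuous (besselKIntegrand t a) := by unfold besselKIntegrand; fun_prop
  refine ((integrable_exp_neg_mul_sq (by positivity : 0 < 1 / (4 * t))).const_mul
    (exp (a ^ 2 * t))).mono' hcont.aestronglyMeasurable (ae_of_all _ fun x => ?_)
  exact (norm_of_nonneg (exp_nonneg _)).trans_le (besselKIntegrand_le_gaussian ht a x)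

lemma besselKIntegral_neg (t a : ℝ) : besselKIntegral t (-a) = besselKIntegral t a := by
  rw [besselKIntegral, ← integral_neg_eq_self]
  simp [besselKIntegral, besselKIntegrand]

lemma hasDerivAt_besselKIntegrand (t a x : ℝ) :
    HasDerivAt (besselKIntegrand t a)
      (a * besselKIntegrand t a x
        - (besselKIntegrand t (a + 1) x - besselKIntegrand t (a - 1) x) / (2 * t)) x := by
  have hshift (b : ℝ) : besselKIntegrand t (a + b) x = besselKIntegrand t a x * exp (b * x) := by
    rw [besselKIntegrand, besselKIntegrand, ← exp_add]; ring_nf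
  have hexponent : HasDerivAt (fun x => a * x - (cosh x - 1) / t) (a - sinh x / t) x := by
    have h := ((hasDerivAt_id x).const_mul a).sub (((hasDerivAt_cosh x).sub_const 1).div_const t)
    rwa [mul_one] at h
  refine hexponent.exp.congr_deriv ?_
  change besselKIntegrand t a x * _ = _
  rw [hshift, show a - 1 = a + -1 by ring, hshift, one_mul, neg_one_mul, sinh_eq]
  ring

lemma besselKIntegral_add_one {t : ℝ} (ht : 0 < t) (a : ℝ) :
    besselKIntegral t (a + 1) = 2 * t * a * besselKIntegral t a + besselKIntegral t (a - 1) := by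
  have hint := integrable_besselKIntegrand ht
  have hdiff : Integrable fun x => besselKIntegrand t (a + 1) x - besselKIntegrand t (a - 1) x :=
    (hint _).sub (hint _)
  have h := integral_eq_zero_of_hasDerivAt_of_integrable (hasDerivAt_besselKIntegrand t a)
    (((hint a).const_mul a).sub (hdiff.div_const _)) (hint a)
  rw [integral_sub ((hint a).const_mul a) (hdiff.div_const _), integral_const_mul, integral_div,
    integral_sub (hint _) (hint _)] at h
  simp only [besselKIntegral]
  field_simp at h
  linarith

lemma besselKIntegral_half {t : ℝ} (ht : 0 < t) :
    besselKIntegral t (1 / 2) = √(2 * π * t) := by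
  have hderiv (x : ℝ) : HasDerivAt (fun x => sinh (x / 2)) (cosh (x / 2) / 2) x := by
    have h := (hasDerivAt_sinh (x / 2)).comp x ((hasDerivAt_id x).div_const 2)
    rwa [one_div, ← div_eq_mul_inv] at h
  have hinj : Function.Injective fun x : ℝ => sinh (x / 2) :=
    sinh_injective.comp fun _ _ h => by simpa using h
  have hrange : range (fun x => sinh (x / 2)) = univ :=
    (sinh_surjective.comp fun y => ⟨2 * y, by ring⟩).range_eq
  have hsym (x : ℝ) : besselKIntegrand t (1 / 2) x + besselKIntegrand t (-(1 / 2)) x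
      = |cosh (x / 2) / 2| * (4 * exp (-(2 / t) * sinh (x / 2) ^ 2)) := by
    have hsplit (b : ℝ) :
        besselKIntegrand t b x = exp (b * x) * exp (-(2 / t) * sinh (x / 2) ^ 2) := by
      rw [besselKIntegrand, ← exp_add, cosh_eq_one_add_two_mul_sinh_half_sq]
      ring_nf
    rw [abs_of_pos (by positivity), hsplit, hsplit, cosh_eq]
    ring_nf
  have hsum : 2 * besselKIntegral t (1 / 2) = 4 * √(π / (2 / t)) := calc
    2 * besselKIntegral t (1 / 2) = besselKIntegral t (1 / 2) + besselKIntegral t (-(1 / 2)) := by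
      rw [besselKIntegral_neg]; ring
    _ = ∫ x, |cosh (x / 2) / 2| * (4 * exp (-(2 / t) * sinh (x / 2) ^ 2)) := by
      rw [besselKIntegral, besselKIntegral, ← integral_add (integrable_besselKIntegrand ht _)
        (integrable_besselKIntegrand ht _)]
      simp only [hsym]
    _ = ∫ s, 4 * exp (-(2 / t) * s ^ 2) := by
      rw [integral_abs_deriv_mul_comp hinj hderiv (fun s => 4 * exp (-(2 / t) * s ^ 2)), hrange,
        Measure.restrict_univ]
    _ = 4 * √(π / (2 / t)) := by rw [integral_const_mul, integral_gaussian]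
  have : √(2 * π * t) = 2 * √(π / (2 / t)) := by
    rw [show 2 * π * t = 2 ^ 2 * (π / (2 / t)) by field_simp, sqrt_mul (by positivity),
      sqrt_sq zero_le_two]
  linarith

lemma setIntegral_Ioi_pow_mul_eq_besselKIntegral {t : ℝ} (ht : 0 < t) (n : ℕ) :
    ∫ u in Ioi 0, u ^ n * (exp (-(u - 1) ^ 2 / (2 * t * u)) / √(2 * π * t * u))
      = besselKIntegral t (n + 1 / 2) / √(2 * π * t) := by
  rw [← range_exp, ← integral_abs_deriv_mul_comp exp_injective hasDerivAt_exp, besselKIntegral,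
    ← integral_div]
  congr 1 with x
  have hexponent : -(exp x - 1) ^ 2 / (2 * t * exp x) = -(cosh x - 1) / t := by
    rw [cosh_eq, exp_neg]
    field_simp
    ring
  have hsqrt : √(2 * π * t * exp x) = √(2 * π * t) * exp (x / 2) := by
    rw [sqrt_mul (by positivity), ← exp_half]
  have hsplit : besselKIntegrand t (n + 1 / 2) x
      = exp x * exp (n * x) * exp (-(cosh x - 1) / t) / exp (x / 2) := by
    rw [besselKIntegrand, ← exp_add, ← exp_add, ← exp_sub]
    ring_nf
  rw [abs_of_pos (exp_pos x), hexponent, hsqrt, hsplit, ← exp_nat_mul]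
  field_simp

lemma besselKIntegral_nat_add_half {t : ℝ} (ht : 0 < t) (n : ℕ) :
    besselKIntegral t (n + 1 / 2) = √(2 * π * t) * y n t := by
  induction n using Nat.twoStepInduction with
  | zero =>
    rw [Nat.cast_zero, zero_add, besselKIntegral_half ht]
    simp [y]
  | one =>
    have h := besselKIntegral_add_one ht (1 / 2)
    rw [show (1 : ℝ) / 2 - 1 = -(1 / 2) by norm_num, besselKIntegral_neg,
      besselKIntegral_half ht] at h
    rw [Nat.cast_one, add_comm, h]
    simp [y, Finset.sum_range_succ]
    ring
  | more n ih₀ ih₁ =>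
    have h := besselKIntegral_add_one ht (n + 3 / 2)
    push_cast at ih₁ ⊢
    rw [show (n : ℝ) + 2 + 1 / 2 = n + 3 / 2 + 1 by ring, h,
      show (n : ℝ) + 3 / 2 = n + 1 + 1 / 2 by ring, ih₁,
      show (n : ℝ) + 1 + 1 / 2 - 1 = n + 1 / 2 by ring, ih₀, y_add_two]
    ring

end BesselKIntegral

theorem stmt_18 (n : ℕ) (t : ℝ) (ht : 0 < t) :
    ∫ u in Set.Ioi (0 : ℝ),
        u ^ n * (Real.exp (-(u - 1) ^ 2 / (2 * t * u)) / Real.sqrt (2 * π * t * u))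
      = y n t := by
  rw [setIntegral_Ioi_pow_mul_eq_besselKIntegral ht, besselKIntegral_nat_add_half ht]
  field_simp
end
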